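/- arXiv:1308.3568 — 5 statements merged into one kernel-verified Lean document; each statement's English description precedes it below -/
import Mathlib

section
/- Let σ₁ ≥ σ₂ > 0 and T₁, T₂ > 0 with T₁/T₂ ≤ 1. If σ₁²/σ₂² − 1 ≥ 2(T₂/T₁ − 1), then −2 + (σ₁²/σ₂²)(T₁/T₂) + (σ₂²/σ₁²)(T₂/T₁) ≥ (T₁/T₂) · (σ₁² − σ₂²)²/(4σ₁²σ₂²). -/
theorem aux_case2 (a r : ℝ) (ha : 1 ≤ a) (hr : 1 ≤ r) (h : 2 * (r - 1) ≤ a - 1) :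
    (1/r) * ((a - 1)^2 / (4*a)) ≤ -2 + a * (1/r) + (1/a) * r := by
  have ha0 : 0 < a := by linarith
  have hr0 : 0 < r := by linarith
  have e1 : -2 + a*(1/r) + (1/a)*r = (a-r)^2/(a*r) := by
    field_simp; ring
  have e2 : (1/r) * ((a - 1)^2/(4*a)) = (a-1)^2/(4*(a*r)) := by
    rw [div_mul_div_comm, one_mul]; ring_nf
  rw [e1, e2, div_le_div_iff₀ (by positivity) (by positivity)]
  have key : (a - 1)^2 ≤ 4 * (a - r)^2 := by nlinarith
  nlinarith [mul_le_mul_of_nonneg_right key (le_of_lt (mul_pos ha0 hr0))]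

/-- For `σ₁ ≥ σ₂ > 0` and `T₁, T₂ > 0` with `T₁/T₂ ≤ 1`, if
`σ₁²/σ₂² − 1 ≥ 2(T₂/T₁ − 1)` then
`−2 + (σ₁²/σ₂²)(T₁/T₂) + (σ₂²/σ₁²)(T₂/T₁) ≥ (T₁/T₂)·(σ₁² − σ₂²)²/(4σ₁²σ₂²)`. -/
theorem variance_statistic_lower_bound_case2 (s1 s2 T1 T2 : ℝ)
    (hs2 : 0 < s2) (hs12 : s2 ≤ s1) (hT1 : 0 < T1) (hT2 : 0 < T2)
    (hratio : T1 / T2 ≤ 1)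
    (hcond : 2 * (T2 / T1 - 1) ≤ s1 ^ 2 / s2 ^ 2 - 1) :
    (T1 / T2) * ((s1 ^ 2 - s2 ^ 2) ^ 2 / (4 * s1 ^ 2 * s2 ^ 2)) ≤
      -2 + (s1 ^ 2 / s2 ^ 2) * (T1 / T2) + (s2 ^ 2 / s1 ^ 2) * (T2 / T1) := by
  have hs1 : 0 < s1 := lt_of_lt_of_le hs2 hs12
  have ha : 1 ≤ s1 ^ 2 / s2 ^ 2 := by
    rw [le_div_iff₀ (by positivity), one_mul]
    exact pow_le_pow_left₀ hs2.le hs12 2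
  have hr : 1 ≤ T2 / T1 := by
    rw [le_div_iff₀ hT1, one_mul]
    rw [div_le_one hT2] at hratio
    exact hratio
  have H := aux_case2 (s1 ^ 2 / s2 ^ 2) (T2 / T1) ha hr hcond
  have e3 : (1 : ℝ) / (T2 / T1) = T1 / T2 := by
    rw [one_div_div]
  have e4 : (s1 ^ 2 / s2 ^ 2 - 1) ^ 2 / (4 * (s1 ^ 2 / s2 ^ 2)) =
      (s1 ^ 2 - s2 ^ 2) ^ 2 / (4 * s1 ^ 2 * s2 ^ 2) := by
    field_simp
  have e5 : (1 : ℝ) / (s1 ^ 2 / s2 ^ 2) = s2 ^ 2 / s1 ^ 2 := by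
    rw [one_div_div]
  rw [e3, e4, e5] at H
  exact H
end

section
/- Let a₁, …, a_k be nonnegative reals with a = (a₁,…,a_k), |a|₁ = Σaᵢ, ‖a‖² = Σaᵢ², |a|_∞ = max aᵢ, and let N ≥ 1. Define λ₊ = (u − |a|₁)/(2[|a|_∞(u − |a|₁) + ‖a‖²]) and λ₋ = (u − |a|₁)/(2[|a|_∞(u − |a|₁) + ‖a‖² + |a|₁u/N]). Then for |a|₁ < u ≤ N|a|_∞, the function ψ_u(λ) = −(1/2)Σᵢ log(1 − 2λaᵢ) − (N/2)log(1 + 2λu/N) evaluated at any λ* ∈ [λ₋, λ₊] satisfies ψ_u(λ*) ≤ −(u − |a|₁)²/(4[|a|_∞(u − |a|₁) + ‖a‖²]) + (u − |a|₁)u³/(2N[|a|_∞(u − |a|₁) + ‖a‖²]²). -/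
open Finset

lemma aux_log_le {s : ℝ} (hs : 1 ≤ s) : Real.log s ≤ (s - 1/s)/2 := by
  have key : MonotoneOn (fun x : ℝ => (x - x⁻¹)/2 - Real.log x) (Set.Ici 1) := by
    have hder : ∀ x : ℝ, 0 < x →
        HasDerivAt (fun x : ℝ => (x - x⁻¹)/2 - Real.log x) ((1 - -(x^2)⁻¹)/2 - x⁻¹) x := by
      intro x hx
      exact (((hasDerivAt_id x).sub (hasDerivAt_inv (ne_of_gt hx))).div_const 2).sub
        (Real.hasDerivAt_log (ne_of_gt hx))
    apply monotoneOn_of_deriv_nonneg (convex_Ici 1)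
    · intro x hx
      exact (hder x (lt_of_lt_of_le one_pos hx)).continuousAt.continuousWithinAt
    · intro x hx
      rw [interior_Ici] at hx
      exact ((hder x (lt_trans one_pos hx)).differentiableAt).differentiableWithinAt
    · intro x hx
      rw [interior_Ici] at hx
      have hx0 : 0 < x := lt_trans one_pos hx
      rw [(hder x hx0).deriv]
      have h2 : (x^2)⁻¹ = (x⁻¹)^2 := by ring
      have h3 : x * x⁻¹ = 1 := mul_inv_cancel₀ (ne_of_gt hx0)
      nlinarith [sq_nonneg (1 - x⁻¹)]
  have h0 := key (Set.mem_Ici.mpr le_rfl) (Set.mem_Ici.mpr hs) hs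
  simp only [Real.log_one, inv_one] at h0
  rw [one_div]
  linarith [h0]

lemma aux_neg_log {y : ℝ} (h0 : 0 ≤ y) (h1 : y < 1) :
    -Real.log (1 - y) ≤ y + y^2/(2*(1-y)) := by
  have ht : 0 < 1 - y := by linarith
  have hs : 1 ≤ 1/(1-y) := (one_le_div ht).mpr (by linarith)
  have h := aux_log_le hs
  rw [Real.log_div one_ne_zero (ne_of_gt ht), Real.log_one, one_div_one_div] at h
  have h2 : (1/(1-y) - (1-y))/2 = y + y^2/(2*(1-y)) := by
    field_simp
    ring
  linarith [h2 ▸ h]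

lemma aux_log_ge {x : ℝ} (hx : 0 ≤ x) : x - x^2 ≤ Real.log (1+x) := by
  have ht : (0:ℝ) < 1 + x := by linarith
  have h1 : Real.log (1+x)⁻¹ ≤ (1+x)⁻¹ - 1 := Real.log_le_sub_one_of_pos (by positivity)
  rw [Real.log_inv] at h1
  have h3 : (1+x) * (1+x)⁻¹ = 1 := mul_inv_cancel₀ (ne_of_gt ht)
  nlinarith [sq_nonneg x, mul_nonneg hx (mul_nonneg hx hx)]

set_option maxHeartbeats 1000000 in
/-- Key analytic bound for the Laplace-method quantile bound.  With
`|a|₁ = Σaᵢ`, `‖a‖² = Σaᵢ²`, `|a|_∞ = max aᵢ`, `N ≥ 1`, and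
`λ₊ = (u − |a|₁)/(2[|a|_∞(u − |a|₁) + ‖a‖²])`,
`λ₋ = (u − |a|₁)/(2[|a|_∞(u − |a|₁) + ‖a‖² + |a|₁u/N])`,
for `|a|₁ < u ≤ N|a|_∞` and any `λ* ∈ [λ₋, λ₊]`,
`ψ_u(λ*) = −(1/2)Σᵢ log(1 − 2λ*aᵢ) − (N/2)log(1 + 2λ*u/N)` satisfies
`ψ_u(λ*) ≤ −(u − |a|₁)²/(4[|a|_∞(u − |a|₁) + ‖a‖²])
  + (u − |a|₁)u³/(2N[|a|_∞(u − |a|₁) + ‖a‖²]²)`. -/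
theorem psi_upper_bound (k : ℕ) (a : Fin k → ℝ) (ha : ∀ i, 0 ≤ a i)
    (N : ℕ) (hN : 1 ≤ N) (u lamStar : ℝ)
    (hu1 : (∑ i, a i) < u) (hu2 : u ≤ (N : ℝ) * ⨆ i, a i)
    (hlow : (u - ∑ i, a i) /
        (2 * ((⨆ i, a i) * (u - ∑ i, a i) + (∑ i, (a i) ^ 2) + (∑ i, a i) * u / N))
      ≤ lamStar)
    (hhigh : lamStar ≤ (u - ∑ i, a i) /
        (2 * ((⨆ i, a i) * (u - ∑ i, a i) + ∑ i, (a i) ^ 2))) :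
    -(1 / 2) * (∑ i, Real.log (1 - 2 * lamStar * a i))
        - ((N : ℝ) / 2) * Real.log (1 + 2 * lamStar * u / N) ≤
      -(u - ∑ i, a i) ^ 2 / (4 * ((⨆ i, a i) * (u - ∑ i, a i) + ∑ i, (a i) ^ 2))
        + (u - ∑ i, a i) * u ^ 3 /
          (2 * N * ((⨆ i, a i) * (u - ∑ i, a i) + ∑ i, (a i) ^ 2) ^ 2) := by
  set S := ∑ i, a i with hSdef
  set Q := ∑ i, (a i)^2 with hQdef
  set M := ⨆ i, a i with hMdef
  clear_value S Q M
  have hSnn : 0 ≤ S := by rw [hSdef]; exact Finset.sum_nonneg fun i _ => ha i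
  have hupos : 0 < u := lt_of_le_of_lt hSnn hu1
  have hNpos : (0:ℝ) < N := by exact_mod_cast hN
  -- k cannot be 0
  rcases Nat.eq_zero_or_pos k with hk | hk
  · exfalso
    subst hk
    have hM0 : M = 0 := by
      rw [hMdef]
      exact Real.iSup_of_isEmpty a
    rw [hM0, mul_zero] at hu2
    linarith
  haveI : Nonempty (Fin k) := ⟨⟨0, hk⟩⟩
  have hBdd : BddAbove (Set.range a) := Set.Finite.bddAbove (Set.finite_range a)
  have hMle : ∀ i, a i ≤ M := fun i => by rw [hMdef]; exact le_ciSup hBdd i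
  obtain ⟨i₀, hi₀⟩ := Finite.exists_max a
  have hMeq : M = a i₀ := by rw [hMdef]; exact le_antisymm (ciSup_le hi₀) (le_ciSup hBdd i₀)
  have hMpos : 0 < M := by
    by_contra h
    push_neg at h
    have : (N:ℝ) * M ≤ 0 := mul_nonpos_of_nonneg_of_nonpos hNpos.le h
    linarith
  have hQge : M^2 ≤ Q := by
    rw [hMeq, hQdef]
    exact Finset.single_le_sum (f := fun i => (a i)^2) (fun i _ => sq_nonneg _)
      (Finset.mem_univ i₀)
  have hQpos : 0 < Q := lt_of_lt_of_le (by positivity) hQge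
  have huS : 0 < u - S := by linarith
  set D := M * (u - S) + Q with hDdef
  clear_value D
  have hDpos : 0 < D := by rw [hDdef]; positivity
  set E := S * u / N with hEdef
  clear_value E
  have hEnn : 0 ≤ E := by rw [hEdef]; positivity
  have hDE : 0 < D + E := by linarith
  have hlamPos : 0 < lamStar :=
    lt_of_lt_of_le (div_pos huS (by positivity)) hlow
  -- λ ≤ (u-S)/(2D)
  have hhi : lamStar ≤ (u - S)/(2*D) := hhigh
  have hlo : (u - S)/(2*(D+E)) ≤ lamStar := hlow
  have hlam2 : lamStar^2 ≤ (u-S)^2/(4*D^2) := by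
    have h1 : lamStar^2 ≤ ((u-S)/(2*D))^2 := by
      apply sq_le_sq' (by nlinarith) hhi
    calc lamStar^2 ≤ ((u-S)/(2*D))^2 := h1
      _ = (u-S)^2/(4*D^2) := by ring
  -- 2λM bound
  have h2lamM : 2 * lamStar * M ≤ M * (u - S) / D := by
    have := mul_le_mul_of_nonneg_right hhi (by positivity : (0:ℝ) ≤ 2*M)
    calc 2 * lamStar * M = lamStar * (2*M) := by ring
      _ ≤ (u-S)/(2*D) * (2*M) := this
      _ = M * (u - S) / D := by field_simp
  have h1m : Q/D ≤ 1 - 2 * lamStar * M := by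
    have hMD : M * (u - S) = D - Q := by rw [hDdef]; ring
    have : M * (u - S) / D = 1 - Q/D := by rw [hMD]; field_simp
    rw [this] at h2lamM
    linarith
  have hQD : 0 < Q/D := by positivity
  -- per-term bound for the sum
  have hterm : ∀ i, -(1/2) * Real.log (1 - 2*lamStar*a i) ≤
      lamStar * a i + lamStar^2 * (a i)^2 * (D/Q) := by
    intro i
    have hai := ha i
    have haiM := hMle i
    have hy0 : 0 ≤ 2*lamStar*a i := by positivity
    have hyM : 2*lamStar*a i ≤ 2*lamStar*M := by nlinarith
    have hden : Q/D ≤ 1 - 2*lamStar*a i := le_trans h1m (by linarith)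
    have hy1 : 2*lamStar*a i < 1 := by
      have : M * (u-S)/D < 1 := by
        rw [div_lt_one hDpos, hDdef]; linarith
      linarith [h2lamM]
    have key := aux_neg_log hy0 hy1
    have hdenpos : 0 < 1 - 2*lamStar*a i := lt_of_lt_of_le hQD hden
    have hfrac : (2*lamStar*a i)^2/(2*(1-(2*lamStar*a i))) ≤
        2 * (lamStar^2*(a i)^2*(D/Q)) := by
      rw [div_le_iff₀ (by linarith)]
      have hDQ : (1:ℝ) ≤ D/Q * (1 - 2*lamStar*a i) := by
        calc (1:ℝ) = D/Q * (Q/D) := by field_simp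
        _ ≤ D/Q * (1 - 2*lamStar*a i) :=
            mul_le_mul_of_nonneg_left hden (by positivity)
      have hw := mul_nonneg (sq_nonneg (lamStar * a i)) (sub_nonneg.mpr hDQ)
      nlinarith [hw]
    linarith
  have hsum : -(1/2) * (∑ i, Real.log (1 - 2*lamStar*a i)) ≤
      lamStar * S + lamStar^2 * D := by
    calc -(1/2) * (∑ i, Real.log (1 - 2*lamStar*a i))
        = ∑ i, -(1/2) * Real.log (1 - 2*lamStar*a i) := by rw [Finset.mul_sum]
      _ ≤ ∑ i, (lamStar * a i + lamStar^2 * (a i)^2 * (D/Q)) :=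
          Finset.sum_le_sum fun i _ => hterm i
      _ = lamStar * S + lamStar^2 * Q * (D/Q) := by
          rw [Finset.sum_add_distrib, ← Finset.mul_sum, hSdef]
          congr 1
          rw [Finset.sum_congr rfl (fun i _ => by ring : ∀ i ∈ univ,
            lamStar^2 * (a i)^2 * (D/Q) = (a i)^2 * (lamStar^2 * (D/Q)))]
          rw [← Finset.sum_mul, hQdef]
          ring
      _ = lamStar * S + lamStar^2 * D := by
          congr 1
          field_simp
  -- log term bound
  have hlog2 : -((N:ℝ)/2) * Real.log (1 + 2*lamStar*u/N) ≤
      -(lamStar*u) + 2*lamStar^2*u^2/N := by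
    have hx : 0 ≤ 2*lamStar*u/N := by positivity
    have h := aux_log_ge hx
    have h2 := mul_le_mul_of_nonneg_left h (by positivity : (0:ℝ) ≤ (N:ℝ)/2)
    have hxval : (N:ℝ)/2 * (2*lamStar*u/N - (2*lamStar*u/N)^2) =
        lamStar*u - 2*lamStar^2*u^2/N := by
      field_simp
    rw [hxval] at h2
    linarith
  -- combine with λ² bounds
  have hb1 : lamStar^2 * D ≤ (u-S)^2/(4*D) := by
    calc lamStar^2 * D ≤ (u-S)^2/(4*D^2) * D := by
          exact mul_le_mul_of_nonneg_right hlam2 hDpos.le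
      _ = (u-S)^2/(4*D) := by field_simp
  have hlam2' : lamStar^2 * (4*D^2) ≤ (u-S)^2 := by
    have h := mul_le_mul_of_nonneg_right hlam2 (by positivity : (0:ℝ) ≤ 4*D^2)
    calc lamStar^2*(4*D^2) ≤ (u-S)^2/(4*D^2)*(4*D^2) := h
      _ = (u-S)^2 := by field_simp
  have hb2 : 2*lamStar^2*u^2/N ≤ (u-S)^2*u^2/(2*N*D^2) := by
    rw [div_le_div_iff₀ hNpos (by positivity)]
    have h2 := mul_le_mul_of_nonneg_right hlam2' (by positivity : (0:ℝ) ≤ u^2 * N)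
    nlinarith [h2]
  have hb3 : -(lamStar * (u - S)) ≤ -((u-S)/(2*(D+E)) * (u-S)) := by
    have := mul_le_mul_of_nonneg_right hlo huS.le
    linarith
  -- final algebra
  have hfin : -((u-S)/(2*(D+E)) * (u-S)) + (u-S)^2/(4*D) + (u-S)^2*u^2/(2*N*D^2)
      ≤ -(u-S)^2/(4*D) + (u-S)*u^3/(2*N*D^2) := by
    have key2 : (u-S)^2*E/(2*D*(D+E)) ≤ (u-S)^2*E/(2*D*D) := by
      apply div_le_div_of_nonneg_left (by positivity) (by positivity)
      nlinarith
    have key3 : (u-S)^2*E/(2*D*D) ≤ ((u-S)*S*u^2)/(2*N*D^2) := by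
      rw [div_le_div_iff₀ (by positivity) (by positivity)]
      have hEe : E * N = S * u := by rw [hEdef]; field_simp
      have h1 : (u-S)^2*E*(2*N*D^2) = 2*D^2*(u-S)^2*(E*N) := by ring
      rw [h1, hEe]
      nlinarith [mul_nonneg (mul_nonneg (mul_nonneg (mul_nonneg huS.le hSnn) hupos.le) hSnn)
        (sq_nonneg D)]
    have main : (u-S)^2*E/(2*D*(D+E)) + (u-S)^2*u^2/(2*N*D^2) ≤ (u-S)*u^3/(2*N*D^2) := by
      have key5 : (u-S)*u^3/(2*(N:ℝ)*D^2) - (u-S)^2*u^2/(2*N*D^2) = (u-S)*S*u^2/(2*N*D^2) := by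
        field_simp
        ring
      linarith [key2, key3, key5]
    have hiden : (-(u-S)^2/(4*D) + (u-S)*u^3/(2*(N:ℝ)*D^2))
        - (-((u-S)/(2*(D+E)) * (u-S)) + (u-S)^2/(4*D) + (u-S)^2*u^2/(2*N*D^2))
        = (u-S)*u^3/(2*N*D^2) - ((u-S)^2*E/(2*D*(D+E)) + (u-S)^2*u^2/(2*N*D^2)) := by
      field_simp
      ring
    linarith [main, hiden]
  calc -(1 / 2) * (∑ i, Real.log (1 - 2 * lamStar * a i))
        - ((N : ℝ) / 2) * Real.log (1 + 2 * lamStar * u / N)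
      ≤ (lamStar * S + lamStar^2 * D) + (-(lamStar*u) + 2*lamStar^2*u^2/N) := by
        have := hlog2
        linarith [hsum]
    _ = -(lamStar * (u - S)) + lamStar^2 * D + 2*lamStar^2*u^2/N := by ring
    _ ≤ -((u-S)/(2*(D+E)) * (u-S)) + (u-S)^2/(4*D) + (u-S)^2*u^2/(2*N*D^2) := by
        linarith [hb1, hb2, hb3]
    _ ≤ -(u-S)^2/(4*D) + (u-S)*u^3/(2*N*D^2) := hfin
end

section
/- Let T ⊆ {1,…,p} with |T| = k and let θ = (θ⁽¹⁾, θ⁽²⁾) ∈ ℝ^{2p} belong to the cone C(3, T) = {θ : |θ_{T^c}|₁ < 3|θ_T|₁} (where T is viewed as a subset of {1,…,2p}). Define T′ ⊆ {1,…,p} by i ∈ T′ iff i ∈ T or i+p ∈ T. Then at least one of the vectors θ⁽¹⁾ + θ⁽²⁾ and θ⁽¹⁾ − θ⁽²⁾ belongs to the cone C(6, T′) = {v ∈ ℝ^p : |v_{T′^c}|₁ < 6|v_{T′}|₁}. -/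
open Finset

/-!
Put `w i = |θ⁽¹⁾ i| + |θ⁽²⁾ i|`. Coordinatewise `w ≤ |θ⁽¹⁾ + θ⁽²⁾| + |θ⁽¹⁾ - θ⁽²⁾| ≤ 2 w`, and since
`T′` collects both halves of `T`, `|θ_T|₁ ≤ |w_{T′}|₁` and `|w_{T′ᶜ}|₁ ≤ |θ_{Tᶜ}|₁`. So if both
vectors failed the `C(6, T′)` inequality, adding the two failures would give
`6 |θ_T|₁ ≤ 6 |w_{T′}|₁ ≤ 2 |w_{T′ᶜ}|₁ ≤ 2 |θ_{Tᶜ}|₁`, against `θ ∈ C(3, T)`.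
-/

section AbsSumDiff

variable {α : Type*} [CommRing α] [LinearOrder α] [IsStrictOrderedRing α]

theorem abs_add_add_abs_sub_le_two_mul (a b : α) : |a + b| + |a - b| ≤ 2 * (|a| + |b|) := by
  linarith [abs_add_le a b, abs_sub a b]

theorem abs_add_abs_le_abs_add_add_abs_sub (a b : α) : |a| + |b| ≤ |a + b| + |a - b| := by
  have ha : |a + a| ≤ |a + b| + |a - b| := by
    simpa [add_add_sub_cancel] using abs_add_le (a + b) (a - b)
  have hb : |b + b| ≤ |a + b| + |a - b| := by
    simpa [add_sub_sub_cancel] using abs_sub (a + b) (a - b)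
  rw [← two_mul, abs_mul, abs_two] at ha hb
  linarith

end AbsSumDiff

namespace Finset

variable {ι M : Type*} [DecidableEq ι]
  [AddCommMonoid M] [PartialOrder M] [IsOrderedAddMonoid M] {f g : ι → M}

theorem sum_elim_le_sum_toLeft_union_toRight (hf : ∀ i, 0 ≤ f i) (hg : ∀ i, 0 ≤ g i)
    (T : Finset (ι ⊕ ι)) :
    ∑ j ∈ T, Sum.elim f g j ≤ ∑ i ∈ T.toLeft ∪ T.toRight, (f i + g i) := by
  rw [sum_sum_eq_sum_toLeft_add_sum_toRight, sum_add_distrib]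
  gcongr
  · exact sum_le_sum_of_subset_of_nonneg subset_union_left fun i _ _ => hf i
  · exact sum_le_sum_of_subset_of_nonneg subset_union_right fun i _ _ => hg i

theorem sum_compl_toLeft_union_toRight_le_sum_compl_elim [Fintype ι] (hf : ∀ i, 0 ≤ f i)
    (hg : ∀ i, 0 ≤ g i) (T : Finset (ι ⊕ ι)) :
    ∑ i ∈ (T.toLeft ∪ T.toRight)ᶜ, (f i + g i) ≤ ∑ j ∈ Tᶜ, Sum.elim f g j := by
  rw [sum_sum_eq_sum_toLeft_add_sum_toRight, sum_add_distrib]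
  gcongr
  · exact sum_le_sum_of_subset_of_nonneg (fun i => by simp +contextual) fun i _ _ => hf i
  · exact sum_le_sum_of_subset_of_nonneg (fun i => by simp +contextual) fun i _ _ => hg i

end Finset

/-- Cone-transfer lemma: if `θ = (θ⁽¹⁾, θ⁽²⁾) ∈ ℝ^{2p}` (indexed by `Fin p ⊕ Fin p`)
belongs to the cone `C(3, T) = {θ : |θ_{T^c}|₁ < 3|θ_T|₁}`, and
`T′ = {i : i ∈ T or i+p ∈ T}`, then at least one of `θ⁽¹⁾ + θ⁽²⁾` and
`θ⁽¹⁾ − θ⁽²⁾` belongs to the cone `C(6, T′)`. -/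
theorem cone_transfer {p : ℕ} (θ1 θ2 : Fin p → ℝ) (T : Finset (Fin p ⊕ Fin p))
    (hcone : ∑ i ∈ Tᶜ, |Sum.elim θ1 θ2 i| < 3 * ∑ i ∈ T, |Sum.elim θ1 θ2 i|) :
    (∑ i ∈ (Finset.univ.filter fun i : Fin p => Sum.inl i ∈ T ∨ Sum.inr i ∈ T)ᶜ,
        |θ1 i + θ2 i| <
      6 * ∑ i ∈ Finset.univ.filter fun i : Fin p => Sum.inl i ∈ T ∨ Sum.inr i ∈ T,
        |θ1 i + θ2 i|) ∨
    (∑ i ∈ (Finset.univ.filter fun i : Fin p => Sum.inl i ∈ T ∨ Sum.inr i ∈ T)ᶜ,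
        |θ1 i - θ2 i| <
      6 * ∑ i ∈ Finset.univ.filter fun i : Fin p => Sum.inl i ∈ T ∨ Sum.inr i ∈ T,
        |θ1 i - θ2 i|) := by
  have hT' : (univ.filter fun i : Fin p => Sum.inl i ∈ T ∨ Sum.inr i ∈ T) =
      T.toLeft ∪ T.toRight := by
    ext; simp
  have habs : Sum.elim (|θ1 ·|) (|θ2 ·|) = (|Sum.elim θ1 θ2 ·|) := by
    ext (i | i) <;> rfl
  have hon := sum_elim_le_sum_toLeft_union_toRight (fun i => abs_nonneg (θ1 i))
    (fun i => abs_nonneg (θ2 i)) T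
  have hoff := sum_compl_toLeft_union_toRight_le_sum_compl_elim (fun i => abs_nonneg (θ1 i))
    (fun i => abs_nonneg (θ2 i)) T
  rw [habs] at hon hoff
  rw [hT']
  set U := T.toLeft ∪ T.toRight
  have hin : ∑ i ∈ U, (|θ1 i| + |θ2 i|) ≤ ∑ i ∈ U, |θ1 i + θ2 i| + ∑ i ∈ U, |θ1 i - θ2 i| := by
    rw [← sum_add_distrib]
    exact sum_le_sum fun i _ => abs_add_abs_le_abs_add_add_abs_sub (θ1 i) (θ2 i)
  have hout : ∑ i ∈ Uᶜ, |θ1 i + θ2 i| + ∑ i ∈ Uᶜ, |θ1 i - θ2 i| ≤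
      2 * ∑ i ∈ Uᶜ, (|θ1 i| + |θ2 i|) := by
    rw [← sum_add_distrib, mul_sum]
    exact sum_le_sum fun i _ => abs_add_add_abs_sub_le_two_mul (θ1 i) (θ2 i)
  by_contra! h
  linarith [h.1, h.2]
end

section
/- Let T ⊆ {1,…,2p} with |T| = k, let θ = (θ⁽¹⁾, θ⁽²⁾) ∈ C(3, T) ⊂ ℝ^{2p}, and let T′ ⊆ {1,…,p} be defined by i ∈ T′ iff i ∈ T or i+p ∈ T. If |(θ⁽¹⁾+θ⁽²⁾)_{T′}|₁ ≥ |(θ⁽¹⁾−θ⁽²⁾)_{T′}|₁, then 2·|θ⁽¹⁾+θ⁽²⁾|₁ ≥ |θ_T|₁ ≥ |θ|₁/4. -/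
open Finset

/-- For `θ = (θ⁽¹⁾, θ⁽²⁾) ∈ C(3, T) ⊂ ℝ^{2p}` (cone condition
`|θ_{T^c}|₁ < 3|θ_T|₁`), with `T′ = {i : i ∈ T or i+p ∈ T}`, if
`|(θ⁽¹⁾+θ⁽²⁾)_{T′}|₁ ≥ |(θ⁽¹⁾−θ⁽²⁾)_{T′}|₁`, then
`2|θ⁽¹⁾+θ⁽²⁾|₁ ≥ |θ_T|₁ ≥ |θ|₁/4`. -/
theorem cone_l1_lower_bound {p : ℕ} (θ1 θ2 : Fin p → ℝ)
    (T : Finset (Fin p ⊕ Fin p))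
    (hcone : ∑ i ∈ Tᶜ, |Sum.elim θ1 θ2 i| < 3 * ∑ i ∈ T, |Sum.elim θ1 θ2 i|)
    (hmaj : ∑ i ∈ Finset.univ.filter
        (fun i : Fin p => Sum.inl i ∈ T ∨ Sum.inr i ∈ T), |θ1 i - θ2 i| ≤
      ∑ i ∈ Finset.univ.filter
        (fun i : Fin p => Sum.inl i ∈ T ∨ Sum.inr i ∈ T), |θ1 i + θ2 i|) :
    ∑ i ∈ T, |Sum.elim θ1 θ2 i| ≤ 2 * ∑ i, |θ1 i + θ2 i| ∧
    (∑ i, |Sum.elim θ1 θ2 i|) / 4 ≤ ∑ i ∈ T, |Sum.elim θ1 θ2 i| := by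
  set T' : Finset (Fin p) :=
    Finset.univ.filter (fun i : Fin p => Sum.inl i ∈ T ∨ Sum.inr i ∈ T) with hT'
  constructor
  · -- first inequality
    have hsub : T ⊆ (T'.image Sum.inl) ∪ (T'.image Sum.inr) := by
      intro j hj
      rcases j with i | i
      · exact Finset.mem_union_left _ (Finset.mem_image_of_mem _
          (by simp [hT', hj]))
      · exact Finset.mem_union_right _ (Finset.mem_image_of_mem _
          (by simp [hT', hj]))
    have h1 : ∑ j ∈ T, |Sum.elim θ1 θ2 j| ≤
        ∑ j ∈ (T'.image Sum.inl) ∪ (T'.image Sum.inr), |Sum.elim θ1 θ2 j| :=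
      Finset.sum_le_sum_of_subset_of_nonneg hsub (fun _ _ _ => abs_nonneg _)
    have hdisj : Disjoint (T'.image Sum.inl) (T'.image (Sum.inr : Fin p → Fin p ⊕ Fin p)) := by
      simp [Finset.disjoint_left]
    have h2 : ∑ j ∈ (T'.image Sum.inl) ∪ (T'.image Sum.inr), |Sum.elim θ1 θ2 j| =
        ∑ i ∈ T', (|θ1 i| + |θ2 i|) := by
      rw [Finset.sum_union hdisj,
        Finset.sum_image (by intro a _ b _ h; exact Sum.inl.inj h),
        Finset.sum_image (by intro a _ b _ h; exact Sum.inr.inj h),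
        ← Finset.sum_add_distrib]
      simp
    have h3 : ∑ i ∈ T', (|θ1 i| + |θ2 i|) ≤
        ∑ i ∈ T', |θ1 i + θ2 i| + ∑ i ∈ T', |θ1 i - θ2 i| := by
      rw [← Finset.sum_add_distrib]
      refine Finset.sum_le_sum (fun i _ => ?_)
      have a1 := abs_add_le (θ1 i + θ2 i) (θ1 i - θ2 i)
      have a2 := abs_sub (θ1 i + θ2 i) (θ1 i - θ2 i)
      have e1 : |θ1 i + θ2 i + (θ1 i - θ2 i)| = 2 * |θ1 i| := by
        rw [show θ1 i + θ2 i + (θ1 i - θ2 i) = 2 * θ1 i by ring, abs_mul]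
        norm_num
      have e2 : |θ1 i + θ2 i - (θ1 i - θ2 i)| = 2 * |θ2 i| := by
        rw [show θ1 i + θ2 i - (θ1 i - θ2 i) = 2 * θ2 i by ring, abs_mul]
        norm_num
      rw [e1] at a1; rw [e2] at a2
      linarith
    have h4 : ∑ i ∈ T', |θ1 i + θ2 i| ≤ ∑ i, |θ1 i + θ2 i| :=
      Finset.sum_le_sum_of_subset_of_nonneg (Finset.subset_univ _)
        (fun _ _ _ => abs_nonneg _)
    linarith
  · -- second inequality
    have hsplit : ∑ i ∈ T, |Sum.elim θ1 θ2 i| + ∑ i ∈ Tᶜ, |Sum.elim θ1 θ2 i| =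
        ∑ i, |Sum.elim θ1 θ2 i| := Finset.sum_add_sum_compl T _
    linarith
end

section
/- Let Σ⁽¹⁾, Σ⁽²⁾ be positive-definite p×p matrices and n₁, n₂ ≥ 1. Suppose the design event holds: for all vectors θ with |θ|₀ ≤ k, (1/2)·nᵢ·‖θ‖²_{Σ⁽ⁱ⁾} ≤ ‖X⁽ⁱ⁾θ‖² ≤ 2·nᵢ·‖θ‖²_{Σ⁽ⁱ⁾} for i = 1,2. Then for the stacked design W = [X⁽¹⁾ X⁽¹⁾; X⁽²⁾ −X⁽²⁾] ∈ ℝ^{(n₁+n₂)×2p} and every k-sparse vector θ = (θ⁽¹⁾, θ⁽²⁾) ∈ ℝ^{2p}: (n₁∧n₂)·(Φ_{k,−}(√Σ⁽¹⁾) ∧ Φ_{k,−}(√Σ⁽²⁾))·‖θ‖² ≤ ‖Wθ‖² ≤ 4(n₁+n₂)·(Φ_{k,+}(√Σ⁽¹⁾) ∨ Φ_{k,+}(√Σ⁽²⁾))·‖θ‖². -/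
open Matrix Finset
open scoped Classical

/-- The `k`-sparse largest eigenvalue `Φ_{k,+}(A) = sup {‖Aθ‖²/‖θ‖² : 1 ≤ |θ|₀ ≤ k}`. -/
noncomputable def sparsePhiMax {m p : ℕ} (A : Matrix (Fin m) (Fin p) ℝ) (k : ℕ) : ℝ :=
  sSup {r | ∃ θ : Fin p → ℝ, θ ≠ 0 ∧ (univ.filter fun i => θ i ≠ 0).card ≤ k ∧
    r = (∑ j, ((A *ᵥ θ) j) ^ 2) / (∑ i, (θ i) ^ 2)}

/-- The `k`-sparse smallest eigenvalue `Φ_{k,−}(A) = inf {‖Aθ‖²/‖θ‖² : 1 ≤ |θ|₀ ≤ k}`. -/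
noncomputable def sparsePhiMin {m p : ℕ} (A : Matrix (Fin m) (Fin p) ℝ) (k : ℕ) : ℝ :=
  sInf {r | ∃ θ : Fin p → ℝ, θ ≠ 0 ∧ (univ.filter fun i => θ i ≠ 0).card ≤ k ∧
    r = (∑ j, ((A *ᵥ θ) j) ^ 2) / (∑ i, (θ i) ^ 2)}

private lemma sum_sq_pos {p : ℕ} {v : Fin p → ℝ} (h : v ≠ 0) : 0 < ∑ i, (v i) ^ 2 := by
  obtain ⟨i, hi⟩ := Function.ne_iff.mp h
  exact Finset.sum_pos' (fun j _ => sq_nonneg _)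
    ⟨i, Finset.mem_univ i, lt_of_le_of_ne (sq_nonneg _) (Ne.symm (pow_ne_zero 2 hi))⟩

private lemma aux_cs {m p : ℕ} (A : Matrix (Fin m) (Fin p) ℝ) (v : Fin p → ℝ) :
    ∑ j, ((A *ᵥ v) j) ^ 2 ≤ (∑ j, ∑ i, (A j i) ^ 2) * ∑ i, (v i) ^ 2 := by
  rw [Finset.sum_mul]
  refine Finset.sum_le_sum fun j _ => ?_
  simpa [Matrix.mulVec, dotProduct] using
    Finset.sum_mul_sq_le_sq_mul_sq univ (fun i => A j i) v

private lemma phiMax_bound {m p : ℕ} (A : Matrix (Fin m) (Fin p) ℝ) (k : ℕ)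
    (v : Fin p → ℝ) (hv : (univ.filter fun i => v i ≠ 0).card ≤ k) :
    ∑ j, ((A *ᵥ v) j) ^ 2 ≤ sparsePhiMax A k * ∑ i, (v i) ^ 2 := by
  by_cases h0 : v = 0
  · simp [h0, Matrix.mulVec_zero]
  · have hS := sum_sq_pos h0
    have hbdd : BddAbove {r | ∃ θ : Fin p → ℝ, θ ≠ 0 ∧
        (univ.filter fun i => θ i ≠ 0).card ≤ k ∧
        r = (∑ j, ((A *ᵥ θ) j) ^ 2) / (∑ i, (θ i) ^ 2)} := by
      refine ⟨∑ j, ∑ i, (A j i) ^ 2, ?_⟩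
      rintro r ⟨w, hw0, -, rfl⟩
      rw [div_le_iff₀ (sum_sq_pos hw0)]
      exact aux_cs A w
    have hmem : (∑ j, ((A *ᵥ v) j) ^ 2) / (∑ i, (v i) ^ 2) ∈
        {r | ∃ θ : Fin p → ℝ, θ ≠ 0 ∧ (univ.filter fun i => θ i ≠ 0).card ≤ k ∧
          r = (∑ j, ((A *ᵥ θ) j) ^ 2) / (∑ i, (θ i) ^ 2)} := ⟨v, h0, hv, rfl⟩
    have h := le_csSup hbdd hmem
    rw [div_le_iff₀ hS] at h
    exact h

private lemma phiMin_bound {m p : ℕ} (A : Matrix (Fin m) (Fin p) ℝ) (k : ℕ)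
    (v : Fin p → ℝ) (hv : (univ.filter fun i => v i ≠ 0).card ≤ k) :
    sparsePhiMin A k * ∑ i, (v i) ^ 2 ≤ ∑ j, ((A *ᵥ v) j) ^ 2 := by
  by_cases h0 : v = 0
  · simp [h0, Matrix.mulVec_zero]
  · have hS := sum_sq_pos h0
    have hbdd : BddBelow {r | ∃ θ : Fin p → ℝ, θ ≠ 0 ∧
        (univ.filter fun i => θ i ≠ 0).card ≤ k ∧
        r = (∑ j, ((A *ᵥ θ) j) ^ 2) / (∑ i, (θ i) ^ 2)} := by
      refine ⟨0, ?_⟩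
      rintro r ⟨w, hw0, -, rfl⟩
      positivity
    have hmem : (∑ j, ((A *ᵥ v) j) ^ 2) / (∑ i, (v i) ^ 2) ∈
        {r | ∃ θ : Fin p → ℝ, θ ≠ 0 ∧ (univ.filter fun i => θ i ≠ 0).card ≤ k ∧
          r = (∑ j, ((A *ᵥ θ) j) ^ 2) / (∑ i, (θ i) ^ 2)} := ⟨v, h0, hv, rfl⟩
    have h := csInf_le hbdd hmem
    rw [le_div_iff₀ hS] at h
    exact h

private lemma phiMax_nonneg {m p : ℕ} (A : Matrix (Fin m) (Fin p) ℝ) (k : ℕ) :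
    0 ≤ sparsePhiMax A k := by
  apply Real.sSup_nonneg
  rintro r ⟨w, hw0, -, rfl⟩
  positivity

private lemma phiMin_nonneg {m p : ℕ} (A : Matrix (Fin m) (Fin p) ℝ) (k : ℕ) :
    0 ≤ sparsePhiMin A k := by
  apply Real.sInf_nonneg
  rintro r ⟨w, hw0, -, rfl⟩
  positivity

private lemma quad_eq {p : ℕ} (Sig R : Matrix (Fin p) (Fin p) ℝ) (hsymm : R.IsSymm)
    (hRR : R * R = Sig) (v : Fin p → ℝ) :
    v ⬝ᵥ (Sig *ᵥ v) = ∑ j, ((R *ᵥ v) j) ^ 2 := by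
  rw [← hRR, ← Matrix.mulVec_mulVec, Matrix.dotProduct_mulVec]
  have hv : Matrix.vecMul v R = R *ᵥ v := by
    rw [← Matrix.vecMul_transpose, hsymm.eq]
  rw [hv]
  simp [dotProduct, pow_two]

private lemma card_support_sumtype {p : ℕ} (θ : Fin p ⊕ Fin p → ℝ) :
    (univ.filter fun i : Fin p ⊕ Fin p => θ i ≠ 0).card
      = (univ.filter fun i : Fin p => θ (Sum.inl i) ≠ 0).card
        + (univ.filter fun i : Fin p => θ (Sum.inr i) ≠ 0).card := by
  simp only [Finset.card_filter]
  exact Fintype.sum_sum_type _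

private lemma card_support_combine_le {p : ℕ} (a b c : Fin p → ℝ)
    (h : ∀ i, c i ≠ 0 → a i ≠ 0 ∨ b i ≠ 0) :
    (univ.filter fun i => c i ≠ 0).card ≤
      (univ.filter fun i => a i ≠ 0).card + (univ.filter fun i => b i ≠ 0).card := by
  refine le_trans (Finset.card_le_card ?_) (Finset.card_union_le _ _)
  intro i hi
  simp only [Finset.mem_filter, Finset.mem_union, Finset.mem_univ, true_and] at *
  exact h i hi

/-- Control of the stacked design `W = [X⁽¹⁾ X⁽¹⁾; X⁽²⁾ −X⁽²⁾]` on sparse vectors: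
under the design event `(1/2)nᵢ‖θ‖²_{Σ⁽ⁱ⁾} ≤ ‖X⁽ⁱ⁾θ‖² ≤ 2nᵢ‖θ‖²_{Σ⁽ⁱ⁾}` for
all `k`-sparse `θ`, every `k`-sparse `θ = (θ⁽¹⁾, θ⁽²⁾) ∈ ℝ^{2p}` satisfies
`(n₁∧n₂)(Φ_{k,−}(√Σ⁽¹⁾) ∧ Φ_{k,−}(√Σ⁽²⁾))‖θ‖² ≤ ‖Wθ‖²
  ≤ 4(n₁+n₂)(Φ_{k,+}(√Σ⁽¹⁾) ∨ Φ_{k,+}(√Σ⁽²⁾))‖θ‖²`. -/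
theorem stacked_design_sparse_eigenvalue_control (n₁ n₂ p k : ℕ)
    (hn₁ : 1 ≤ n₁) (hn₂ : 1 ≤ n₂)
    (Sig1 Sig2 R1 R2 : Matrix (Fin p) (Fin p) ℝ)
    (hSig1 : Sig1.PosDef) (hSig2 : Sig2.PosDef)
    -- `R1 = √Σ⁽¹⁾`, `R2 = √Σ⁽²⁾`
    (hR1symm : R1.IsSymm) (hR2symm : R2.IsSymm)
    (hR1 : R1 * R1 = Sig1) (hR2 : R2 * R2 = Sig2)
    (X1 : Matrix (Fin n₁) (Fin p) ℝ) (X2 : Matrix (Fin n₂) (Fin p) ℝ)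
    -- the design event
    (hdes1 : ∀ θ : Fin p → ℝ, (univ.filter fun i => θ i ≠ 0).card ≤ k →
      (1 / 2) * n₁ * (θ ⬝ᵥ (Sig1 *ᵥ θ)) ≤ ∑ j, ((X1 *ᵥ θ) j) ^ 2 ∧
      ∑ j, ((X1 *ᵥ θ) j) ^ 2 ≤ 2 * n₁ * (θ ⬝ᵥ (Sig1 *ᵥ θ)))
    (hdes2 : ∀ θ : Fin p → ℝ, (univ.filter fun i => θ i ≠ 0).card ≤ k →
      (1 / 2) * n₂ * (θ ⬝ᵥ (Sig2 *ᵥ θ)) ≤ ∑ j, ((X2 *ᵥ θ) j) ^ 2 ∧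
      ∑ j, ((X2 *ᵥ θ) j) ^ 2 ≤ 2 * n₂ * (θ ⬝ᵥ (Sig2 *ᵥ θ)))
    (θ : Fin p ⊕ Fin p → ℝ)
    (hθsparse : (univ.filter fun i : Fin p ⊕ Fin p => θ i ≠ 0).card ≤ k) :
    (min (n₁ : ℝ) n₂) * min (sparsePhiMin R1 k) (sparsePhiMin R2 k) * (∑ i, (θ i) ^ 2) ≤
      ∑ j, ((Matrix.fromBlocks X1 X1 X2 (-X2) *ᵥ θ) j) ^ 2 ∧
    ∑ j, ((Matrix.fromBlocks X1 X1 X2 (-X2) *ᵥ θ) j) ^ 2 ≤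
      4 * ((n₁ : ℝ) + n₂) * max (sparsePhiMax R1 k) (sparsePhiMax R2 k) *
        (∑ i, (θ i) ^ 2) := by
  set θ1 : Fin p → ℝ := fun i => θ (Sum.inl i) with hθ1def
  set θ2 : Fin p → ℝ := fun i => θ (Sum.inr i) with hθ2def
  have hθelim : θ = Sum.elim θ1 θ2 := by funext i; cases i <;> rfl
  set u : Fin p → ℝ := θ1 + θ2 with hudef
  set w : Fin p → ℝ := θ1 - θ2 with hwdef
  -- sparsity of u and w
  have hcards : (univ.filter fun i => θ1 i ≠ 0).card
      + (univ.filter fun i => θ2 i ≠ 0).card ≤ k := by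
    rw [← card_support_sumtype θ]; exact hθsparse
  have hu : (univ.filter fun i => u i ≠ 0).card ≤ k := by
    refine le_trans (card_support_combine_le θ1 θ2 u fun i hi => ?_) hcards
    by_contra h
    push_neg at h
    exact hi (by simp [hudef, Pi.add_apply, h.1, h.2])
  have hw : (univ.filter fun i => w i ≠ 0).card ≤ k := by
    refine le_trans (card_support_combine_le θ1 θ2 w fun i hi => ?_) hcards
    by_contra h
    push_neg at h
    exact hi (by simp [hwdef, Pi.sub_apply, h.1, h.2])
  -- splitting of the stacked design
  have hWsplit : ∑ j, ((Matrix.fromBlocks X1 X1 X2 (-X2) *ᵥ θ) j) ^ 2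
      = ∑ j, ((X1 *ᵥ u) j) ^ 2 + ∑ j, ((X2 *ᵥ w) j) ^ 2 := by
    have h1 : X1 *ᵥ u = X1 *ᵥ θ1 + X1 *ᵥ θ2 := Matrix.mulVec_add X1 θ1 θ2
    have h2 : X2 *ᵥ w = X2 *ᵥ θ1 + (-X2) *ᵥ θ2 := by
      rw [Matrix.neg_mulVec, hwdef, Matrix.mulVec_sub, sub_eq_add_neg]
    rw [hθelim, Fintype.sum_sum_type]
    rw [Matrix.fromBlocks_mulVec]
    simp only [Sum.elim_inl, Sum.elim_inr, Sum.elim_comp_inl, Sum.elim_comp_inr]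
    rw [h1, h2]
  -- splitting of the norm of θ
  have hsum : ∑ i, (θ i) ^ 2 = ∑ i, (θ1 i) ^ 2 + ∑ i, (θ2 i) ^ 2 :=
    Fintype.sum_sum_type _
  have huw : ∑ i, (u i) ^ 2 + ∑ i, (w i) ^ 2 = 2 * ∑ i, (θ i) ^ 2 := by
    rw [hsum, ← Finset.sum_add_distrib, mul_add, Finset.mul_sum, Finset.mul_sum,
      ← Finset.sum_add_distrib]
    refine Finset.sum_congr rfl fun i _ => ?_
    simp only [hudef, hwdef, Pi.add_apply, Pi.sub_apply]
    ring
  -- design events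
  obtain ⟨hl1, hr1⟩ := hdes1 u hu
  obtain ⟨hl2, hr2⟩ := hdes2 w hw
  rw [quad_eq Sig1 R1 hR1symm hR1 u] at hl1 hr1
  rw [quad_eq Sig2 R2 hR2symm hR2 w] at hl2 hr2
  -- phi bounds
  have hu_min := phiMin_bound R1 k u hu
  have hu_max := phiMax_bound R1 k u hu
  have hw_min := phiMin_bound R2 k w hw
  have hw_max := phiMax_bound R2 k w hw
  -- abbreviations and positivity facts
  have ha : (0:ℝ) ≤ ∑ i, (u i) ^ 2 := Finset.sum_nonneg fun i _ => sq_nonneg _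
  have hb : (0:ℝ) ≤ ∑ i, (w i) ^ 2 := Finset.sum_nonneg fun i _ => sq_nonneg _
  have hn1r : (0:ℝ) ≤ (n₁:ℝ) := Nat.cast_nonneg n₁
  have hn2r : (0:ℝ) ≤ (n₂:ℝ) := Nat.cast_nonneg n₂
  have hΦm1 := phiMin_nonneg R1 k
  have hΦm2 := phiMin_nonneg R2 k
  have hΦM1 := phiMax_nonneg R1 k
  have hΦM2 := phiMax_nonneg R2 k
  have hminΦnn : (0:ℝ) ≤ min (sparsePhiMin R1 k) (sparsePhiMin R2 k) := le_min hΦm1 hΦm2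
  have hmaxΦnn : (0:ℝ) ≤ max (sparsePhiMax R1 k) (sparsePhiMax R2 k) :=
    le_trans hΦM1 (le_max_left _ _)
  constructor
  · -- lower bound
    rw [hWsplit]
    have p1 : min (n₁:ℝ) n₂ * min (sparsePhiMin R1 k) (sparsePhiMin R2 k)
        ≤ (n₁:ℝ) * sparsePhiMin R1 k :=
      mul_le_mul (min_le_left _ _) (min_le_left _ _) hminΦnn hn1r
    have p2 : min (n₁:ℝ) n₂ * min (sparsePhiMin R1 k) (sparsePhiMin R2 k)
        ≤ (n₂:ℝ) * sparsePhiMin R2 k :=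
      mul_le_mul (min_le_right _ _) (min_le_right _ _) hminΦnn hn2r
    have p1a := mul_le_mul_of_nonneg_right p1 ha
    have p2a := mul_le_mul_of_nonneg_right p2 hb
    have h1 := mul_le_mul_of_nonneg_left hu_min (by positivity : (0:ℝ) ≤ (1/2) * (n₁:ℝ))
    have h2 := mul_le_mul_of_nonneg_left hw_min (by positivity : (0:ℝ) ≤ (1/2) * (n₂:ℝ))
    have c0 : min (n₁:ℝ) n₂ * min (sparsePhiMin R1 k) (sparsePhiMin R2 k) * (∑ i, (θ i) ^ 2)
        = (1/2) * (min (n₁:ℝ) n₂ * min (sparsePhiMin R1 k) (sparsePhiMin R2 k)) * (∑ i, (u i) ^ 2)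
          + (1/2) * (min (n₁:ℝ) n₂ * min (sparsePhiMin R1 k) (sparsePhiMin R2 k)) * (∑ i, (w i) ^ 2) := by
      have hs2 : (∑ i, (θ i) ^ 2) = ((∑ i, (u i) ^ 2) + (∑ i, (w i) ^ 2)) / 2 := by
        rw [huw]; ring
      rw [hs2]; ring
    linarith [c0, h1, h2, hl1, hl2, p1a, p2a]
  · -- upper bound
    rw [hWsplit]
    have q1 : (n₁:ℝ) * sparsePhiMax R1 k
        ≤ ((n₁:ℝ) + n₂) * max (sparsePhiMax R1 k) (sparsePhiMax R2 k) :=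
      mul_le_mul (by linarith) (le_max_left _ _) hΦM1 (by linarith)
    have q2 : (n₂:ℝ) * sparsePhiMax R2 k
        ≤ ((n₁:ℝ) + n₂) * max (sparsePhiMax R1 k) (sparsePhiMax R2 k) :=
      mul_le_mul (by linarith) (le_max_right _ _) hΦM2 (by linarith)
    have q1a := mul_le_mul_of_nonneg_right q1 ha
    have q2a := mul_le_mul_of_nonneg_right q2 hb
    have h1 := mul_le_mul_of_nonneg_left hu_max (by positivity : (0:ℝ) ≤ 2 * (n₁:ℝ))
    have h2 := mul_le_mul_of_nonneg_left hw_max (by positivity : (0:ℝ) ≤ 2 * (n₂:ℝ))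
    have c0 : 4 * ((n₁:ℝ) + n₂) * max (sparsePhiMax R1 k) (sparsePhiMax R2 k) * (∑ i, (θ i) ^ 2)
        = 2 * (((n₁:ℝ) + n₂) * max (sparsePhiMax R1 k) (sparsePhiMax R2 k)) * (∑ i, (u i) ^ 2)
          + 2 * (((n₁:ℝ) + n₂) * max (sparsePhiMax R1 k) (sparsePhiMax R2 k)) * (∑ i, (w i) ^ 2) := by
      have hs2 : (∑ i, (θ i) ^ 2) = ((∑ i, (u i) ^ 2) + (∑ i, (w i) ^ 2)) / 2 := by
        rw [huw]; ring
      rw [hs2]; ring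
    linarith [c0, h1, h2, hr1, hr2, q1a, q2a]
end
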